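/- arXiv:2112.05899 — 2 statements merged into one kernel-verified Lean document; each statement's English description precedes it below -/
import Mathlib

section
/- Let C, θ ∈ ℝ with θ > 0 and C < −θ. Set ω = √(C² − θ²) and Δ = arccos(θ/C)/ω. Then r = i·ω is a root of the characteristic equation r − C·e^{−r·Δ} + θ = 0. -/
theorem critical_delay_root (C θ : ℝ) (hθ : 0 < θ) (hC : C < -θ) :
    let ω : ℝ := Real.sqrt (C ^ 2 - θ ^ 2)
    let Δ : ℝ := Real.arccos (θ / C) / ω
    (Complex.I * ω) - (C : ℂ) * Complex.exp (-(Complex.I * ω) * Δ) + (θ : ℂ) = 0 := by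
  intro ω Δ
  have hCneg : C < 0 := by linarith
  have hCne : C ≠ 0 := ne_of_lt hCneg
  have hpos : 0 < C ^ 2 - θ ^ 2 := by nlinarith
  have hωpos : 0 < ω := Real.sqrt_pos.mpr hpos
  have ha : ω * Δ = Real.arccos (θ / C) := by
    have : Δ = Real.arccos (θ / C) / ω := rfl
    rw [this]; field_simp
  set a := Real.arccos (θ / C) with ha_def
  have hb1 : -1 ≤ θ / C := by
    rw [le_div_iff_of_neg hCneg]; linarith
  have hb2 : θ / C ≤ 1 := by
    rw [div_le_iff_of_neg hCneg]; nlinarith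
  have hcos : Real.cos a = θ / C := Real.cos_arccos hb1 hb2
  have h1 : C * Real.cos a = θ := by
    rw [hcos]; field_simp
  have hsin : Real.sin a = Real.sqrt (1 - (θ / C) ^ 2) := by
    rw [ha_def]; exact Real.sin_arccos _
  have h2 : C * Real.sin a = -ω := by
    rw [hsin]
    have hq : 1 - (θ / C) ^ 2 = (C ^ 2 - θ ^ 2) / C ^ 2 := by field_simp
    rw [hq, Real.sqrt_div hpos.le, Real.sqrt_sq_eq_abs, abs_of_neg hCneg]
    show C * (ω / -C) = -ω
    rw [div_neg, mul_neg, neg_inj, mul_comm, div_mul_cancel₀ _ hCne]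
  have hexp : -(Complex.I * (ω : ℂ)) * (Δ : ℂ) = ((-(ω * Δ) : ℝ) : ℂ) * Complex.I := by
    push_cast; ring
  rw [hexp, Complex.exp_mul_I, ← Complex.ofReal_cos, ← Complex.ofReal_sin,
    Real.cos_neg, Real.sin_neg, ha]
  apply Complex.ext <;> simp [Complex.cos_ofReal_re, Complex.sin_ofReal_re] <;> linarith [h1, h2]
end

section
/- Let C, θ ∈ ℝ with θ > 0 and |C| ≤ θ. Then the characteristic equation r − C·e^{−rΔ} + θ = 0 has no purely imaginary root r = iω with ω ∈ ℝ, ω ≠ 0, for any Δ ≥ 0. -/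
theorem no_imaginary_root (C θ : ℝ) (hθ : 0 < θ) (hC : |C| ≤ θ) :
    ¬ ∃ (Δ ω : ℝ), 0 ≤ Δ ∧ ω ≠ 0 ∧
      (Complex.I * ω) - (C : ℂ) * Complex.exp (-(Complex.I * ω) * Δ)
        + (θ : ℂ) = 0 := by
  rintro ⟨Δ, ω, hΔ, hω, h⟩
  have hrw : -(Complex.I * ω) * Δ = ((-(ω * Δ) : ℝ) : ℂ) * Complex.I := by
    push_cast; ring
  rw [hrw, Complex.exp_mul_I, Complex.ofReal_neg, Complex.cos_neg, Complex.sin_neg,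
    ← Complex.ofReal_cos, ← Complex.ofReal_sin] at h
  rw [Complex.ext_iff] at h
  obtain ⟨h1, h2⟩ := h
  simp at h1 h2
  rw [show ((ω : ℂ) * (Δ : ℂ)) = ((ω * Δ : ℝ) : ℂ) by push_cast; ring] at h1 h2
  simp only [Complex.cos_ofReal_re, Complex.sin_ofReal_re, Complex.cos_ofReal_im,
    Complex.sin_ofReal_im, neg_zero, add_zero, zero_add, mul_zero, sub_zero] at h1 h2
  -- h1 : real part equation, h2 : imaginary part
  have hc : C * Real.cos (ω * Δ) = θ := by nlinarith [h1]
  have hs : ω = -(C * Real.sin (ω * Δ)) := by nlinarith [h2]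
  have hC2 : C ^ 2 ≤ θ ^ 2 := sq_le_sq' (abs_le.mp hC).1 (abs_le.mp hC).2
  have hsq : (C * Real.cos (ω * Δ)) ^ 2 = θ ^ 2 := by rw [hc]
  have hcos1 : Real.cos (ω * Δ) ^ 2 = 1 := by
    nlinarith [mul_le_mul_of_nonneg_right hC2 (sq_nonneg (Real.cos (ω * Δ))),
      Real.neg_one_le_cos (ω * Δ), Real.cos_le_one (ω * Δ), sq_nonneg θ, hθ, mul_pos hθ hθ]
  have hsin0 : Real.sin (ω * Δ) = 0 := by
    nlinarith [Real.sin_sq_add_cos_sq (ω * Δ)]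
  exact hω (by rw [hs, hsin0]; ring)
end
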